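/- For the finite-difference operators N₁ = −[x₂(ξ−x₁)/(ξ(x₁−x₂))]T_{q,x₁} + [x₁(ξ−x₂)/(ξ(x₁−x₂))]T_{q,x₂} and N₂ = −[(ξ−x₁)/(x₁−x₂)]T_{q,x₁} + [(ξ−x₂)/(x₁−x₂)]T_{q,x₂}, the Laurent polynomials p_ν = (x₁x₂)^{ν₁}(ξ^{−1}x₁, ξ^{−1}x₂; q)_{ν₂₁} (ν₁ ≤ ν₂ integers, ν₂₁ = ν₂−ν₁) satisfy N₁ p_ν = q^{ν₁} p_ν and N₂ p_ν = q^{ν₂} p_ν. -/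

import Mathlib

/-!
Both operators act diagonally because of the one-variable shift relation
`(ξ - x) (ξ⁻¹ q x; q)_m = (ξ - q^m x) (ξ⁻¹ x; q)_m`: applying `T_{q,x_i}` to `p_ν` and clearing
the factor `ξ - x_i` multiplies `p_ν` by `q^{ν₁} (ξ - q^{ν₂₁} x_i)`. The two operators then
reduce to the elementary identities
`-x₂ (ξ - c x₁) + x₁ (ξ - c x₂) = ξ (x₁ - x₂)` and `-(ξ - c x₁) + (ξ - c x₂) = c (x₁ - x₂)`
with `c = q^{ν₂₁}`.
-/

open Finset

/-- The q-Pochhammer symbol `(a;q)_n`. -/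
noncomputable def qPoch (a q : ℂ) (n : ℕ) : ℂ := ∏ j ∈ Finset.range n, (1 - a * q ^ j)

/-- The basis p_ν(x₁,x₂) = (x₁x₂)^{ν₁}(ξ⁻¹x₁, ξ⁻¹x₂; q)_{ν₂₁}. -/
noncomputable def pbasis (q ξ : ℂ) (n1 n2 : ℤ) (x1 x2 : ℂ) : ℂ :=
  (x1 * x2) ^ n1 * qPoch (ξ⁻¹ * x1) q (n2 - n1).toNat *
    qPoch (ξ⁻¹ * x2) q (n2 - n1).toNat

lemma qPoch_succ (a q : ℂ) (m : ℕ) : qPoch a q (m + 1) = qPoch a q m * (1 - a * q ^ m) :=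
  prod_range_succ _ _

lemma qPoch_succ' (a q : ℂ) (m : ℕ) : qPoch a q (m + 1) = (1 - a) * qPoch (q * a) q m := by
  rw [qPoch, prod_range_succ', pow_zero, mul_one, mul_comm, qPoch]
  congr 1
  exact prod_congr rfl fun j _ => by ring

lemma one_sub_mul_qPoch_mul_left (a q : ℂ) (m : ℕ) :
    (1 - a) * qPoch (q * a) q m = (1 - a * q ^ m) * qPoch a q m := by
  rw [← qPoch_succ', qPoch_succ, mul_comm]

lemma sub_mul_qPoch_inv_mul_mul_left {ξ : ℂ} (hξ : ξ ≠ 0) (q x : ℂ) (m : ℕ) :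
    (ξ - x) * qPoch (ξ⁻¹ * (q * x)) q m = (ξ - q ^ m * x) * qPoch (ξ⁻¹ * x) q m := by
  have key := one_sub_mul_qPoch_mul_left (ξ⁻¹ * x) q m
  rw [show q * (ξ⁻¹ * x) = ξ⁻¹ * (q * x) by ring] at key
  calc (ξ - x) * qPoch (ξ⁻¹ * (q * x)) q m
      = ξ * ((1 - ξ⁻¹ * x) * qPoch (ξ⁻¹ * (q * x)) q m) := by field_simp
    _ = ξ * ((1 - ξ⁻¹ * x * q ^ m) * qPoch (ξ⁻¹ * x) q m) := by rw [key]
    _ = (ξ - q ^ m * x) * qPoch (ξ⁻¹ * x) q m := by field_simp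

lemma pbasis_comm (q ξ : ℂ) (n1 n2 : ℤ) (x1 x2 : ℂ) :
    pbasis q ξ n1 n2 x1 x2 = pbasis q ξ n1 n2 x2 x1 := by
  rw [pbasis, pbasis, mul_comm x2 x1]
  ring

lemma sub_mul_pbasis_mul_left {ξ : ℂ} (hξ : ξ ≠ 0) (q : ℂ) (n1 n2 : ℤ) (x1 x2 : ℂ) :
    (ξ - x1) * pbasis q ξ n1 n2 (q * x1) x2
      = q ^ n1 * (ξ - q ^ (n2 - n1).toNat * x1) * pbasis q ξ n1 n2 x1 x2 := by
  have key := sub_mul_qPoch_inv_mul_mul_left hξ q x1 (n2 - n1).toNat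
  have hz : (q * x1 * x2) ^ n1 = q ^ n1 * (x1 * x2) ^ n1 := by rw [mul_assoc, mul_zpow]
  simp only [pbasis, hz]
  linear_combination q ^ n1 * (x1 * x2) ^ n1 * qPoch (ξ⁻¹ * x2) q (n2 - n1).toNat * key

lemma sub_mul_pbasis_mul_right {ξ : ℂ} (hξ : ξ ≠ 0) (q : ℂ) (n1 n2 : ℤ) (x1 x2 : ℂ) :
    (ξ - x2) * pbasis q ξ n1 n2 x1 (q * x2)
      = q ^ n1 * (ξ - q ^ (n2 - n1).toNat * x2) * pbasis q ξ n1 n2 x1 x2 := by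
  rw [pbasis_comm, sub_mul_pbasis_mul_left hξ, pbasis_comm q ξ n1 n2 x2]

theorem pbasis_eigenfunctions_general (q ξ : ℂ) (hq : q ≠ 0) (hξ : ξ ≠ 0)
    (n1 n2 : ℤ) (h : n1 ≤ n2) (x1 x2 : ℂ)
    (hne : x1 ≠ x2) :
    (-(x2 * (ξ - x1) / (ξ * (x1 - x2))) * pbasis q ξ n1 n2 (q * x1) x2
        + x1 * (ξ - x2) / (ξ * (x1 - x2)) * pbasis q ξ n1 n2 x1 (q * x2)
      = q ^ n1 * pbasis q ξ n1 n2 x1 x2)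
    ∧ (-((ξ - x1) / (x1 - x2)) * pbasis q ξ n1 n2 (q * x1) x2
        + (ξ - x2) / (x1 - x2) * pbasis q ξ n1 n2 x1 (q * x2)
      = q ^ n2 * pbasis q ξ n1 n2 x1 x2) := by
  have hsub : x1 - x2 ≠ 0 := sub_ne_zero.mpr hne
  have shift1 := sub_mul_pbasis_mul_left hξ q n1 n2 x1 x2
  have shift2 := sub_mul_pbasis_mul_right hξ q n1 n2 x1 x2
  have hq2 : q ^ n2 = q ^ n1 * q ^ (n2 - n1).toNat := by
    rw [← zpow_natCast, Int.toNat_of_nonneg (sub_nonneg.mpr h), ← zpow_add₀ hq,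
      add_sub_cancel]
  set c := q ^ (n2 - n1).toNat
  set p := pbasis q ξ n1 n2 x1 x2
  set p₁ := pbasis q ξ n1 n2 (q * x1) x2
  set p₂ := pbasis q ξ n1 n2 x1 (q * x2)
  constructor
  · field_simp
    linear_combination -x2 * shift1 + x1 * shift2
  · rw [hq2]
    field_simp
    linear_combination -shift1 + shift2

/-- p_ν are eigenfunctions of the operators N₁ and N₂:
N₁ p_ν = q^{ν₁} p_ν, N₂ p_ν = q^{ν₂} p_ν, where
N₁ = −[x₂(ξ−x₁)/(ξ(x₁−x₂))]T_{q,x₁} + [x₁(ξ−x₂)/(ξ(x₁−x₂))]T_{q,x₂} and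
N₂ = −[(ξ−x₁)/(x₁−x₂)]T_{q,x₁} + [(ξ−x₂)/(x₁−x₂)]T_{q,x₂}. -/
theorem pbasis_eigenfunctions (q ξ : ℂ) (hq : q ≠ 0) (hξ : ξ ≠ 0)
    (n1 n2 : ℤ) (h : n1 ≤ n2) (x1 x2 : ℂ) (h1 : x1 ≠ 0) (h2 : x2 ≠ 0)
    (hne : x1 ≠ x2) :
    (-(x2 * (ξ - x1) / (ξ * (x1 - x2))) * pbasis q ξ n1 n2 (q * x1) x2
        + x1 * (ξ - x2) / (ξ * (x1 - x2)) * pbasis q ξ n1 n2 x1 (q * x2)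
      = q ^ n1 * pbasis q ξ n1 n2 x1 x2)
    ∧ (-((ξ - x1) / (x1 - x2)) * pbasis q ξ n1 n2 (q * x1) x2
        + (ξ - x2) / (x1 - x2) * pbasis q ξ n1 n2 x1 (q * x2)
      = q ^ n2 * pbasis q ξ n1 n2 x1 x2) :=
  pbasis_eigenfunctions_general q ξ hq hξ n1 n2 h x1 x2 hne
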